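/- Let L : ℝ^d → ℝ be a differentiable β-smooth function bounded below. Run T iterations of layer-wise SAM with step size η, ascent radius r, and batch size b: at step t, draw a mini-batch stochastic gradient oracle ∇L_{t+1} (conditionally unbiased with per-point variance bounded by σ²/b at each evaluation point), set w_{t+1/2} = w_t + r∇L_{t+1}(w_t') where ∇L_{t+1}(w_t') is the stochastic gradient with coordinates outside the selected layers zeroed, and update w_{t+1} = w_t − η∇L_{t+1}(w_{t+1/2}). If 0 < η ≤ 1/(2β) and 0 < r ≤ 1/(2β), then (1/T)·Σ_{t=0}^{T−1} 𝔼[‖∇L(w_t)‖²] ≤ (4/(Tη))·(L(w_0) − 𝔼[L(w_T)]) + 4(ηβ + β²r²)·σ²/b, regardless of which and how many layers are selected to be perturbed at each step. -/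

import Mathlib

/-!
Each step is controlled by the descent inequality `L(w - ηg) ≤ L(w) - η⟪∇L(w), g⟫ + βη²‖g‖²`
of a `β`-smooth function. Conditioning on the current iterate and the ascent gradient replaces the
descent gradient by its mean `∇L(w_{t+1/2})` in the cross term, which `2⟪a, c⟫ ≥ ‖a‖² + ‖c‖² -
‖c - a‖²` and `‖∇L(w_{t+1/2}) - ∇L(w_t)‖ ≤ βr‖∇L_{t+1}(w_t')‖` bound from below. The second moment
of each oracle is its variance plus the squared norm of its mean, and zeroing coordinates does not
increase the norm of the gradient: this is why the choice of layers is irrelevant. For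
`βη ≤ 1/2` and `β²r² ≤ 1/2` the expected loss then decreases by `(η/4)𝔼‖∇L(w_t)‖²` up to a noise
term of order `η(βη + β²r²)σ²/b`, and the bound follows by telescoping.
-/

open MeasureTheory
open scoped RealInnerProductSpace

/-- The orthogonal projection of `x ∈ ℝ^d` onto the coordinate subspace given by the
coordinates (layers) in `S`: the coordinates outside `S` are zeroed. -/
noncomputable def layerProj {d : ℕ} (S : Finset (Fin d)) (x : EuclideanSpace ℝ (Fin d)) :
    EuclideanSpace ℝ (Fin d) :=
  (EuclideanSpace.equiv (Fin d) ℝ).symm fun i => if i ∈ S then x i else 0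

theorem continuous_layerProj {d : ℕ} (S : Finset (Fin d)) : Continuous (layerProj S) :=
  (EuclideanSpace.equiv (Fin d) ℝ).symm.continuous.comp <| continuous_pi fun i =>
    continuous_if_const _ (fun _ => (EuclideanSpace.proj i).continuous) fun _ => continuous_const

theorem norm_layerProj_le {d : ℕ} (S : Finset (Fin d)) (x : EuclideanSpace ℝ (Fin d)) :
    ‖layerProj S x‖ ≤ ‖x‖ := by
  rw [EuclideanSpace.norm_eq, EuclideanSpace.norm_eq]
  refine Real.sqrt_le_sqrt (Finset.sum_le_sum fun i _ => ?_)
  by_cases hi : i ∈ S <;> simp [layerProj, hi, sq_nonneg]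

open InnerProductSpace

section Smooth

variable {E : Type*} [NormedAddCommGroup E] [InnerProductSpace ℝ E]

theorem norm_sq_add_norm_sq_sub_sq_le_two_mul_inner {a c : E} {K : ℝ} (h : ‖c - a‖ ≤ K) :
    ‖a‖ ^ 2 + ‖c‖ ^ 2 - K ^ 2 ≤ 2 * ⟪a, c⟫ := by
  have hsq := pow_le_pow_left₀ (norm_nonneg _) h 2
  rw [norm_sub_sq_real, real_inner_comm] at hsq
  linarith

variable [CompleteSpace E] {L : E → ℝ} {β : ℝ}

theorem le_add_inner_gradient_add_mul_norm_sub_sq (hL : Differentiable ℝ L) (hβ : 0 ≤ β)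
    (hsmooth : ∀ u v, ‖gradient L u - gradient L v‖ ≤ β * ‖u - v‖) (x y : E) :
    L y ≤ L x + ⟪gradient L x, y - x⟫ + β * ‖y - x‖ ^ 2 := by
  have hmvt : ‖L y - L x - toDual ℝ E (gradient L x) (y - x)‖ ≤ β * ‖y - x‖ * ‖y - x‖ := by
    refine (convex_closedBall x ‖y - x‖).norm_image_sub_le_of_norm_hasFDerivWithin_le'
      (fun z _ => (hL z).hasGradientAt.hasFDerivAt.hasFDerivWithinAt) (fun z hz => ?_)
      (Metric.mem_closedBall_self (norm_nonneg _)) (by simp [dist_eq_norm])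
    rw [← map_sub, LinearIsometryEquiv.norm_map]
    rw [Metric.mem_closedBall, dist_eq_norm] at hz
    exact (hsmooth z x).trans (mul_le_mul_of_nonneg_left hz hβ)
  rw [toDual_apply_apply, Real.norm_eq_abs] at hmvt
  linarith [(abs_le.mp hmvt).2]

theorem continuous_gradient_of_norm_sub_le (hβ : 0 ≤ β)
    (hsmooth : ∀ u v, ‖gradient L u - gradient L v‖ ≤ β * ‖u - v‖) : Continuous (gradient L) :=
  (LipschitzWith.of_dist_le_mul (K := β.toNNReal) fun u v => by
    simpa [dist_eq_norm, hβ] using hsmooth u v).continuous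

end Smooth

theorem average_le_of_forall_le_sub_add {a g : ℕ → ℝ} {η c : ℝ} {T : ℕ} (hη : 0 < η)
    (hc : 0 ≤ c) (h : ∀ t < T, a (t + 1) ≤ a t - η / 4 * g t + η * c) :
    1 / (T : ℝ) * ∑ t ∈ Finset.range T, g t ≤ 4 / (T * η) * (a 0 - a T) + 4 * c := by
  rcases T.eq_zero_or_pos with rfl | hT
  · simpa using hc
  have hsum : ∑ t ∈ Finset.range T, (a (t + 1) - a t)
      ≤ ∑ t ∈ Finset.range T, (-(η / 4) * g t + η * c) :=
    Finset.sum_le_sum fun t ht => by linarith [h t (Finset.mem_range.mp ht)]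
  rw [Finset.sum_range_sub, Finset.sum_add_distrib, ← Finset.mul_sum, Finset.sum_const,
    Finset.card_range, nsmul_eq_mul] at hsum
  have hT' : (0 : ℝ) < T := Nat.cast_pos.mpr hT
  calc 1 / (T : ℝ) * ∑ t ∈ Finset.range T, g t
      = 4 / (T * η) * (η / 4 * ∑ t ∈ Finset.range T, g t) := by field_simp
    _ ≤ 4 / (T * η) * (a 0 - a T + T * (η * c)) := by gcongr; linarith
    _ = 4 / (T * η) * (a 0 - a T) + 4 * c := by field_simp

theorem sam_step_le_of_moment_bounds {A A' G M I Ea Em β η r s : ℝ} (hβ : 0 ≤ β) (hη : 0 ≤ η)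
    (hβη : β * η ≤ 1 / 2) (hβr : β ^ 2 * r ^ 2 ≤ 1 / 2)
    (hdesc : A' ≤ A - η * I + β * η ^ 2 * Em) (hlower : G + M - β ^ 2 * r ^ 2 * Ea ≤ 2 * I)
    (hEa : Ea ≤ s + G) (hEm : Em ≤ s + M) (hG : 0 ≤ G) (hM : 0 ≤ M) :
    A' ≤ A - η / 4 * G + η * (β * η + β ^ 2 * r ^ 2 / 2) * s := by
  linarith [mul_le_mul_of_nonneg_left hlower hη,
    mul_le_mul_of_nonneg_left hEa (by positivity : 0 ≤ η * β ^ 2 * r ^ 2),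
    mul_le_mul_of_nonneg_left hEm (by positivity : 0 ≤ β * η ^ 2),
    mul_nonneg (mul_nonneg hη hG) (by linarith : (0 : ℝ) ≤ 1 / 4 - β ^ 2 * r ^ 2 / 2),
    mul_nonneg (mul_nonneg hη hM) (by linarith : (0 : ℝ) ≤ 1 / 2 - β * η)]

section Expectation

variable {Ω E : Type*} {m m0 : MeasurableSpace Ω} {μ : Measure Ω}
  [NormedAddCommGroup E] [InnerProductSpace ℝ E]

theorem integrable_inner_of_integrable_norm_sq {U V : Ω → E} (hU : AEStronglyMeasurable U μ)
    (hV : AEStronglyMeasurable V μ) (hU2 : Integrable (fun ω => ‖U ω‖ ^ 2) μ)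
    (hV2 : Integrable (fun ω => ‖V ω‖ ^ 2) μ) : Integrable (fun ω => ⟪U ω, V ω⟫) μ := by
  refine ((hU2.add hV2).div_const 2).mono' (hU.inner hV) (ae_of_all _ fun ω => ?_)
  rw [Real.norm_eq_abs, Pi.add_apply]
  nlinarith [abs_real_inner_le_norm (U ω) (V ω), sq_nonneg (‖U ω‖ - ‖V ω‖)]

theorem integral_le_of_ae_condExp_le [IsProbabilityMeasure μ] (hm : m ≤ m0) {f : Ω → ℝ} {c : ℝ}
    (h : ∀ᵐ ω ∂μ, μ[f | m] ω ≤ c) : ∫ ω, f ω ∂μ ≤ c := by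
  have := isFiniteMeasure_trim (μ := μ) hm
  calc ∫ ω, f ω ∂μ = ∫ ω, μ[f | m] ω ∂μ := (integral_condExp hm).symm
    _ ≤ ∫ _, c ∂μ := integral_mono_ae integrable_condExp (integrable_const c) h
    _ = c := by simp

theorem integral_norm_sq_add_sub_le_two_mul_integral_inner {U V G : Ω → E} {κ : ℝ}
    (h : ∀ ω, ‖V ω - U ω‖ ≤ κ * ‖G ω‖) (hU2 : Integrable (fun ω => ‖U ω‖ ^ 2) μ)
    (hV2 : Integrable (fun ω => ‖V ω‖ ^ 2) μ) (hG2 : Integrable (fun ω => ‖G ω‖ ^ 2) μ)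
    (hUV : Integrable (fun ω => ⟪U ω, V ω⟫) μ) :
    ∫ ω, ‖U ω‖ ^ 2 ∂μ + ∫ ω, ‖V ω‖ ^ 2 ∂μ - κ ^ 2 * ∫ ω, ‖G ω‖ ^ 2 ∂μ
      ≤ 2 * ∫ ω, ⟪U ω, V ω⟫ ∂μ := by
  have hpt : ∀ ω, ‖U ω‖ ^ 2 + ‖V ω‖ ^ 2 - κ ^ 2 * ‖G ω‖ ^ 2 ≤ 2 * ⟪U ω, V ω⟫ := fun ω => by
    simpa only [mul_pow] using norm_sq_add_norm_sq_sub_sq_le_two_mul_inner (h ω)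
  have hint : Integrable (fun ω => ‖U ω‖ ^ 2 + ‖V ω‖ ^ 2 - κ ^ 2 * ‖G ω‖ ^ 2) μ :=
    (hU2.add hV2).sub (hG2.const_mul _)
  calc ∫ ω, ‖U ω‖ ^ 2 ∂μ + ∫ ω, ‖V ω‖ ^ 2 ∂μ - κ ^ 2 * ∫ ω, ‖G ω‖ ^ 2 ∂μ
      = ∫ ω, (‖U ω‖ ^ 2 + ‖V ω‖ ^ 2 - κ ^ 2 * ‖G ω‖ ^ 2) ∂μ := by
        rw [integral_sub _ (hG2.const_mul _), integral_add hU2 hV2,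
          integral_const_mul]
        exact hU2.add hV2
    _ ≤ ∫ ω, 2 * ⟪U ω, V ω⟫ ∂μ := integral_mono hint (hUV.const_mul 2) hpt
    _ = 2 * ∫ ω, ⟪U ω, V ω⟫ ∂μ := integral_const_mul _ _

variable [CompleteSpace E]

theorem integral_inner_eq_of_condExp_eq [IsFiniteMeasure μ] (hm : m ≤ m0) {X Y Z : Ω → E}
    (hX : StronglyMeasurable[m] X) (hXY : Integrable (fun ω => ⟪X ω, Y ω⟫) μ)
    (hY : Integrable Y μ) (hZ : μ[Y | m] =ᵐ[μ] Z) :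
    ∫ ω, ⟪X ω, Y ω⟫ ∂μ = ∫ ω, ⟪X ω, Z ω⟫ ∂μ := by
  have := isFiniteMeasure_trim (μ := μ) hm
  calc ∫ ω, ⟪X ω, Y ω⟫ ∂μ = ∫ ω, μ[fun ω => ⟪X ω, Y ω⟫ | m] ω ∂μ := (integral_condExp hm).symm
    _ = ∫ ω, ⟪X ω, Z ω⟫ ∂μ := integral_congr_ae <|
      (condExp_bilin_of_stronglyMeasurable_left (innerSL ℝ) hX hXY hY).trans <|
        hZ.mono fun ω hω => congrArg (inner ℝ (X ω)) hω

theorem integral_norm_sq_le_of_condExp_eq [IsProbabilityMeasure μ] (hm : m ≤ m0) {Y Z : Ω → E}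
    (hZ : StronglyMeasurable[m] Z) (hY : Integrable Y μ)
    (hY2 : Integrable (fun ω => ‖Y ω‖ ^ 2) μ) (hZ2 : Integrable (fun ω => ‖Z ω‖ ^ 2) μ)
    (hmean : μ[Y | m] =ᵐ[μ] Z) {c : ℝ}
    (hvar : ∀ᵐ ω ∂μ, μ[fun ω => ‖Y ω - Z ω‖ ^ 2 | m] ω ≤ c) :
    ∫ ω, ‖Y ω‖ ^ 2 ∂μ ≤ c + ∫ ω, ‖Z ω‖ ^ 2 ∂μ := by
  have hZY := integrable_inner_of_integrable_norm_sq (hZ.mono hm).aestronglyMeasurable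
    hY.aestronglyMeasurable hZ2 hY2
  have hcross : ∫ ω, ⟪Z ω, Y ω⟫ ∂μ = ∫ ω, ‖Z ω‖ ^ 2 ∂μ := by
    rw [integral_inner_eq_of_condExp_eq hm hZ hZY hY hmean]
    simp_rw [real_inner_self_eq_norm_sq]
  have hsplit : ∫ ω, ‖Y ω - Z ω‖ ^ 2 ∂μ
      = ∫ ω, ‖Y ω‖ ^ 2 ∂μ - 2 * ∫ ω, ⟪Z ω, Y ω⟫ ∂μ + ∫ ω, ‖Z ω‖ ^ 2 ∂μ := by
    simp_rw [norm_sub_sq_real, real_inner_comm (Z _)]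
    rw [integral_add _ hZ2, integral_sub hY2 (hZY.const_mul 2), integral_const_mul]
    exact hY2.sub (hZY.const_mul 2)
  linarith [integral_le_of_ae_condExp_le hm hvar]

theorem integral_comp_sub_smul_le {L : E → ℝ} {β : ℝ} (hL : Differentiable ℝ L) (hβ : 0 ≤ β)
    (hsmooth : ∀ u v, ‖gradient L u - gradient L v‖ ≤ β * ‖u - v‖) {w G : Ω → E} (η : ℝ)
    (hLw : Integrable (fun ω => L (w ω)) μ) (hLw' : Integrable (fun ω => L (w ω - η • G ω)) μ)
    (hwG : Integrable (fun ω => ⟪gradient L (w ω), G ω⟫) μ)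
    (hG2 : Integrable (fun ω => ‖G ω‖ ^ 2) μ) :
    ∫ ω, L (w ω - η • G ω) ∂μ ≤ ∫ ω, L (w ω) ∂μ - η * ∫ ω, ⟪gradient L (w ω), G ω⟫ ∂μ
      + β * η ^ 2 * ∫ ω, ‖G ω‖ ^ 2 ∂μ := by
  have hpt : ∀ ω, L (w ω - η • G ω)
      ≤ L (w ω) - η * ⟪gradient L (w ω), G ω⟫ + β * η ^ 2 * ‖G ω‖ ^ 2 := fun ω => by
    have := le_add_inner_gradient_add_mul_norm_sub_sq hL hβ hsmooth (w ω) (w ω - η • G ω)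
    rw [sub_sub_cancel_left, inner_neg_right, real_inner_smul_right, norm_neg, norm_smul,
      mul_pow, Real.norm_eq_abs, sq_abs, ← sub_eq_add_neg] at this
    linarith
  refine (integral_mono hLw' ?_ hpt).trans_eq ?_
  · exact (hLw.sub (hwG.const_mul η)).add (hG2.const_mul _)
  rw [integral_add _ (hG2.const_mul _), integral_sub hLw (hwG.const_mul η), integral_const_mul,
    integral_const_mul]
  exact hLw.sub (hwG.const_mul η)

end Expectation

section Step

variable {Ω E : Type*} [MeasurableSpace Ω] {μ : Measure Ω} [IsProbabilityMeasure μ]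
  [NormedAddCommGroup E] [InnerProductSpace ℝ E] [CompleteSpace E]
  [MeasurableSpace E] [BorelSpace E] [SecondCountableTopology E]

theorem integral_le_of_sam_step {L : E → ℝ} {β η r s : ℝ} (hL : Differentiable ℝ L)
    (hβ : 0 ≤ β) (hsmooth : ∀ u v, ‖gradient L u - gradient L v‖ ≤ β * ‖u - v‖)
    (hη : 0 ≤ η) (hβη : β * η ≤ 1 / 2) (hβr : β ^ 2 * r ^ 2 ≤ 1 / 2)
    {P : E → E} (hP : Continuous P) (hP_norm : ∀ x, ‖P x‖ ≤ ‖x‖)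
    {w Ga Gm : Ω → E} (hw : Measurable w) (hGa : Measurable Ga)
    (hasc_mean : μ[Ga | MeasurableSpace.comap w inferInstance] =ᵐ[μ]
      fun ω => P (gradient L (w ω)))
    (hasc_var : ∀ᵐ ω ∂μ, μ[fun ω => ‖Ga ω - P (gradient L (w ω))‖ ^ 2 |
      MeasurableSpace.comap w inferInstance] ω ≤ s)
    (hmid_mean : μ[Gm | MeasurableSpace.comap (fun ω => (w ω, Ga ω)) inferInstance] =ᵐ[μ]
      fun ω => gradient L (w ω + r • Ga ω))
    (hmid_var : ∀ᵐ ω ∂μ, μ[fun ω => ‖Gm ω - gradient L (w ω + r • Ga ω)‖ ^ 2 |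
      MeasurableSpace.comap (fun ω => (w ω, Ga ω)) inferInstance] ω ≤ s)
    (hLw : Integrable (fun ω => L (w ω)) μ)
    (hLw' : Integrable (fun ω => L (w ω - η • Gm ω)) μ)
    (hg2 : Integrable (fun ω => ‖gradient L (w ω)‖ ^ 2) μ)
    (hGa_int : Integrable Ga μ) (hGa2 : Integrable (fun ω => ‖Ga ω‖ ^ 2) μ)
    (hGm_int : Integrable Gm μ) (hGm2 : Integrable (fun ω => ‖Gm ω‖ ^ 2) μ)
    (hgmid2 : Integrable (fun ω => ‖gradient L (w ω + r • Ga ω)‖ ^ 2) μ) :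
    ∫ ω, L (w ω - η • Gm ω) ∂μ ≤ ∫ ω, L (w ω) ∂μ - η / 4 * ∫ ω, ‖gradient L (w ω)‖ ^ 2 ∂μ
      + η * (β * η + β ^ 2 * r ^ 2 / 2) * s := by
  have hgc := continuous_gradient_of_norm_sub_le hβ hsmooth
  have hw1 := comap_measurable (m := (inferInstance : MeasurableSpace E)) w
  have hw2 := comap_measurable (m := (inferInstance : MeasurableSpace (E × E)))
    fun ω => (w ω, Ga ω)
  have hPg_sm : StronglyMeasurable[MeasurableSpace.comap w inferInstance]
      fun ω => P (gradient L (w ω)) :=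
    ((hP.comp hgc).measurable.comp hw1).stronglyMeasurable
  have hg_sm : StronglyMeasurable[MeasurableSpace.comap (fun ω => (w ω, Ga ω)) inferInstance]
      fun ω => gradient L (w ω) :=
    ((hgc.comp continuous_fst).measurable.comp hw2).stronglyMeasurable
  have hgmid_sm : StronglyMeasurable[MeasurableSpace.comap (fun ω => (w ω, Ga ω)) inferInstance]
      fun ω => gradient L (w ω + r • Ga ω) :=
    ((hgc.comp (continuous_fst.add (continuous_snd.const_smul r))).measurable.comp
      hw2).stronglyMeasurable
  have hm1 := hw.comap_le
  have hm2 := (hw.prodMk hGa).comap_le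
  have hPg2 : Integrable (fun ω => ‖P (gradient L (w ω))‖ ^ 2) μ :=
    hg2.mono' ((hPg_sm.mono hm1).aestronglyMeasurable.norm.pow 2) (ae_of_all _ fun ω => by
      simpa using pow_le_pow_left₀ (norm_nonneg _) (hP_norm _) 2)
  have hGa_bd := (integral_norm_sq_le_of_condExp_eq hm1 hPg_sm hGa_int hGa2 hPg2 hasc_mean
    hasc_var).trans (add_le_add_right (integral_mono hPg2 hg2 fun ω =>
      pow_le_pow_left₀ (norm_nonneg _) (hP_norm _) 2) s)
  have hGm_bd := integral_norm_sq_le_of_condExp_eq hm2 hgmid_sm hGm_int hGm2 hgmid2 hmid_mean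
    hmid_var
  have hgGm := integrable_inner_of_integrable_norm_sq (hg_sm.mono hm2).aestronglyMeasurable
    hGm_int.aestronglyMeasurable hg2 hGm2
  have hdesc := integral_comp_sub_smul_le hL hβ hsmooth η hLw hLw' hgGm hGm2
  rw [integral_inner_eq_of_condExp_eq hm2 hg_sm hgGm hGm_int hmid_mean] at hdesc
  have hlower := integral_norm_sq_add_sub_le_two_mul_integral_inner (κ := β * |r|)
    (fun ω => by simpa [norm_smul, mul_assoc] using hsmooth (w ω + r • Ga ω) (w ω)) hg2 hgmid2
    hGa2 (integrable_inner_of_integrable_norm_sq (hg_sm.mono hm2).aestronglyMeasurable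
      (hgmid_sm.mono hm2).aestronglyMeasurable hg2 hgmid2)
  rw [mul_pow, sq_abs] at hlower
  exact sam_step_le_of_moment_bounds hβ hη hβη hβr hdesc hlower hGa_bd hGm_bd
    (integral_nonneg fun _ => by positivity) (integral_nonneg fun _ => by positivity)

end Step

theorem layerwise_sam_convergence_general
    {d : ℕ} {Ω : Type*} [MeasurableSpace Ω] (μ : Measure Ω) [IsProbabilityMeasure μ]
    (β r η σ : ℝ) (b : ℕ)
    (L : EuclideanSpace ℝ (Fin d) → ℝ) (hL : Differentiable ℝ L)
    (hsmooth : ∀ u v : EuclideanSpace ℝ (Fin d),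
      ‖gradient L u - gradient L v‖ ≤ β * ‖u - v‖)
    (hη : 0 < η) (hη2 : η ≤ 1 / (2 * β)) (hr : 0 < r) (hr2 : r ≤ 1 / (2 * β))
    (T : ℕ)
    (w0 : EuclideanSpace ℝ (Fin d))
    (w Gasc Gmid : ℕ → Ω → EuclideanSpace ℝ (Fin d))
    (hw_meas : ∀ t, Measurable (w t))
    (hGasc_meas : ∀ t, Measurable (Gasc t))
    (hw0 : ∀ ω, w 0 ω = w0)
    (hupdate : ∀ t < T, ∀ ω, w (t + 1) ω = w t ω - η • Gmid t ω)
    (S : ℕ → Finset (Fin d))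
    -- the oracle is conditionally unbiased with variance `≤ σ²/b` at the ascent point `w t`
    (hasc_mean : ∀ t < T,
      μ[Gasc t | MeasurableSpace.comap (w t) inferInstance] =ᵐ[μ]
        fun ω => layerProj (S t) (gradient L (w t ω)))
    (hasc_var : ∀ t < T, ∀ᵐ ω ∂μ,
      (μ[(fun ω => ‖Gasc t ω - layerProj (S t) (gradient L (w t ω))‖ ^ 2) |
          MeasurableSpace.comap (w t) inferInstance]) ω ≤ σ ^ 2 / b)
    -- the oracle is conditionally unbiased with variance `≤ σ²/b` at the perturbed point
    (hmid_mean : ∀ t < T,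
      μ[Gmid t | MeasurableSpace.comap (fun ω => (w t ω, Gasc t ω)) inferInstance] =ᵐ[μ]
        fun ω => gradient L (w t ω + r • Gasc t ω))
    (hmid_var : ∀ t < T, ∀ᵐ ω ∂μ,
      (μ[(fun ω => ‖Gmid t ω - gradient L (w t ω + r • Gasc t ω)‖ ^ 2) |
          MeasurableSpace.comap (fun ω => (w t ω, Gasc t ω)) inferInstance]) ω ≤ σ ^ 2 / b)
    -- integrability of the quantities appearing in the argument
    (hL_int : ∀ t ≤ T, Integrable (fun ω => L (w t ω)) μ)
    (hgrad_sq_int : ∀ t ≤ T, Integrable (fun ω => ‖gradient L (w t ω)‖ ^ 2) μ)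
    (hasc_int : ∀ t < T, Integrable (Gasc t) μ)
    (hasc_sq_int : ∀ t < T, Integrable (fun ω => ‖Gasc t ω‖ ^ 2) μ)
    (hmid_int : ∀ t < T, Integrable (Gmid t) μ)
    (hmid_sq_int : ∀ t < T, Integrable (fun ω => ‖Gmid t ω‖ ^ 2) μ)
    (hgradmid_sq_int : ∀ t < T,
      Integrable (fun ω => ‖gradient L (w t ω + r • Gasc t ω)‖ ^ 2) μ) :
    (1 / (T : ℝ)) * ∑ t ∈ Finset.range T, ∫ ω, ‖gradient L (w t ω)‖ ^ 2 ∂μ ≤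
      (4 / ((T : ℝ) * η)) * (L w0 - ∫ ω, L (w T ω) ∂μ) +
        4 * (η * β + β ^ 2 * r ^ 2) * σ ^ 2 / b := by
  have hβ : 0 < β := by
    by_contra! hβ
    linarith [div_nonpos_of_nonneg_of_nonpos zero_le_one (by linarith : 2 * β ≤ 0)]
  have hβη : β * η ≤ 1 / 2 := by linarith [(le_div_iff₀ (by positivity)).mp hη2]
  have hβr : β ^ 2 * r ^ 2 ≤ 1 / 2 := by
    nlinarith [(le_div_iff₀ (by positivity)).mp hr2, mul_pos hβ hr]
  have hs : 0 ≤ σ ^ 2 / b := by positivity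
  have step : ∀ t < T, ∫ ω, L (w (t + 1) ω) ∂μ ≤ ∫ ω, L (w t ω) ∂μ
      - η / 4 * ∫ ω, ‖gradient L (w t ω)‖ ^ 2 ∂μ
      + η * ((β * η + β ^ 2 * r ^ 2 / 2) * (σ ^ 2 / b)) := fun t ht => by
    simp only [hupdate t ht, ← mul_assoc]
    exact integral_le_of_sam_step hL hβ.le hsmooth hη.le hβη hβr (continuous_layerProj (S t))
      (norm_layerProj_le (S t)) (hw_meas t) (hGasc_meas t) (hasc_mean t ht) (hasc_var t ht)
      (hmid_mean t ht) (hmid_var t ht) (hL_int t ht.le)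
      (by simpa only [hupdate t ht] using hL_int (t + 1) ht) (hgrad_sq_int t ht.le)
      (hasc_int t ht) (hasc_sq_int t ht) (hmid_int t ht) (hmid_sq_int t ht)
      (hgradmid_sq_int t ht)
  have hL0 : ∫ ω, L (w 0 ω) ∂μ = L w0 := by simp [hw0]
  refine (average_le_of_forall_le_sub_add (a := fun t => ∫ ω, L (w t ω) ∂μ)
    (g := fun t => ∫ ω, ‖gradient L (w t ω)‖ ^ 2 ∂μ) hη (by positivity) step).trans ?_
  rw [hL0, mul_div_assoc (4 * (η * β + β ^ 2 * r ^ 2))]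
  linarith [mul_nonneg (sq_nonneg (β * r)) hs]

/-- Theorem 1: convergence guarantee of layer-wise SAM (Algorithm 1). Run `T` iterations
`w_{t+1/2} = w_t + r ∇L_{t+1}(w_t')`, `w_{t+1} = w_t − η ∇L_{t+1}(w_{t+1/2})`, where
`∇L_{t+1}(w_t')` is the stochastic gradient with the coordinates outside the selected
layers `S t` zeroed, and the mini-batch oracle is conditionally unbiased with per-point
variance `≤ σ²/b`. If `0 < η ≤ 1/(2β)` and `0 < r ≤ 1/(2β)`, then
`(1/T) Σ_{t<T} 𝔼‖∇L(w_t)‖² ≤ (4/(Tη))(L(w_0) − 𝔼[L(w_T)]) + 4(ηβ + β²r²)σ²/b`,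
regardless of which and how many layers are perturbed at each step. -/
theorem layerwise_sam_convergence
    {d : ℕ} {Ω : Type*} [MeasurableSpace Ω] (μ : Measure Ω) [IsProbabilityMeasure μ]
    (β r η σ : ℝ) (b : ℕ) (hb : 0 < b) (hβ : 0 ≤ β)
    (L : EuclideanSpace ℝ (Fin d) → ℝ) (hL : Differentiable ℝ L)
    (hsmooth : ∀ u v : EuclideanSpace ℝ (Fin d),
      ‖gradient L u - gradient L v‖ ≤ β * ‖u - v‖)
    (hbdd : ∃ C : ℝ, ∀ x, C ≤ L x)
    (hη : 0 < η) (hη2 : η ≤ 1 / (2 * β)) (hr : 0 < r) (hr2 : r ≤ 1 / (2 * β))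
    (T : ℕ) (hT : 0 < T)
    (w0 : EuclideanSpace ℝ (Fin d))
    (w Gasc Gmid : ℕ → Ω → EuclideanSpace ℝ (Fin d))
    (hw_meas : ∀ t, Measurable (w t))
    (hGasc_meas : ∀ t, Measurable (Gasc t)) (hGmid_meas : ∀ t, Measurable (Gmid t))
    (hw0 : ∀ ω, w 0 ω = w0)
    (hupdate : ∀ t < T, ∀ ω, w (t + 1) ω = w t ω - η • Gmid t ω)
    -- the ascent gradient has the coordinates outside the selected layers zeroed
    (S : ℕ → Finset (Fin d))
    (hGasc_supp : ∀ t < T, ∀ ω, ∀ i ∉ S t, Gasc t ω i = 0)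
    -- the oracle is conditionally unbiased with variance `≤ σ²/b` at the ascent point `w t`
    (hasc_mean : ∀ t < T,
      μ[Gasc t | MeasurableSpace.comap (w t) inferInstance] =ᵐ[μ]
        fun ω => layerProj (S t) (gradient L (w t ω)))
    (hasc_var : ∀ t < T, ∀ᵐ ω ∂μ,
      (μ[(fun ω => ‖Gasc t ω - layerProj (S t) (gradient L (w t ω))‖ ^ 2) |
          MeasurableSpace.comap (w t) inferInstance]) ω ≤ σ ^ 2 / b)
    -- the oracle is conditionally unbiased with variance `≤ σ²/b` at the perturbed point
    (hmid_mean : ∀ t < T,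
      μ[Gmid t | MeasurableSpace.comap (fun ω => (w t ω, Gasc t ω)) inferInstance] =ᵐ[μ]
        fun ω => gradient L (w t ω + r • Gasc t ω))
    (hmid_var : ∀ t < T, ∀ᵐ ω ∂μ,
      (μ[(fun ω => ‖Gmid t ω - gradient L (w t ω + r • Gasc t ω)‖ ^ 2) |
          MeasurableSpace.comap (fun ω => (w t ω, Gasc t ω)) inferInstance]) ω ≤ σ ^ 2 / b)
    -- integrability of the quantities appearing in the argument
    (hL_int : ∀ t ≤ T, Integrable (fun ω => L (w t ω)) μ)
    (hgrad_sq_int : ∀ t ≤ T, Integrable (fun ω => ‖gradient L (w t ω)‖ ^ 2) μ)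
    (hasc_int : ∀ t < T, Integrable (Gasc t) μ)
    (hasc_sq_int : ∀ t < T, Integrable (fun ω => ‖Gasc t ω‖ ^ 2) μ)
    (hmid_int : ∀ t < T, Integrable (Gmid t) μ)
    (hmid_sq_int : ∀ t < T, Integrable (fun ω => ‖Gmid t ω‖ ^ 2) μ)
    (hgradmid_sq_int : ∀ t < T,
      Integrable (fun ω => ‖gradient L (w t ω + r • Gasc t ω)‖ ^ 2) μ) :
    (1 / (T : ℝ)) * ∑ t ∈ Finset.range T, ∫ ω, ‖gradient L (w t ω)‖ ^ 2 ∂μ ≤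
      (4 / ((T : ℝ) * η)) * (L w0 - ∫ ω, L (w T ω) ∂μ) +
        4 * (η * β + β ^ 2 * r ^ 2) * σ ^ 2 / b :=
  layerwise_sam_convergence_general μ β r η σ b L hL hsmooth hη hη2 hr hr2 T w0 w Gasc Gmid hw_meas
    hGasc_meas hw0 hupdate S hasc_mean hasc_var hmid_mean hmid_var hL_int hgrad_sq_int hasc_int
    hasc_sq_int hmid_int hmid_sq_int hgradmid_sq_int
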